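/- Let $\phi \in GL^\infty(\mathbb{T})$ admit a weak asymmetric factorization $\phi = \phi_- t^{\kappa}\phi_0$ in $L^p$ (with $\phi_0$ even). Then $F := \phi\,\tilde\phi^{-1}$, where $\tilde\phi(t)=\phi(t^{-1})$, admits the weak antisymmetric factorization $F = \phi_-\, t^{2\kappa}\, \tilde\phi_-^{-1}$ with the same factor $\phi_-$ and index $\kappa$. -/

import Mathlib

open MeasureTheory Complex Real
open scoped ENNReal
noncomputable section
namespace TH

abbrev Tp : ℝ := 2 * Real.pi
instance : Fact (0 < Tp) := ⟨by positivity⟩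
abbrev 𝕋 := AddCircle Tp
abbrev μ : Measure 𝕋 := AddCircle.haarAddCircle

/-- Invertibility in `L^∞(𝕋)`. -/
def GLinf (φ : 𝕋 → ℂ) : Prop :=
  MemLp φ ⊤ μ ∧ MemLp (fun x => (φ x)⁻¹) ⊤ μ ∧ ∀ᵐ x ∂μ, φ x ≠ 0

/-- The function `t ↦ 1 + t⁻¹` on the circle. -/
def onePlusTInv (x : 𝕋) : ℂ := 1 + fourier (-1) x
/-- The function `t ↦ 1 - t⁻¹` on the circle. -/
def oneMinusTInv (x : 𝕋) : ℂ := 1 - fourier (-1) x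
/-- The function `t ↦ |1 - t|` on the circle. -/
def absOneMinusT (x : 𝕋) : ℂ := ((‖1 - fourier 1 x‖ : ℝ) : ℂ)
/-- The function `t ↦ |1 + t|` on the circle. -/
def absOnePlusT (x : 𝕋) : ℂ := ((‖1 + fourier 1 x‖ : ℝ) : ℂ)
/-- Evenness (a.e.): `f(t⁻¹) = f(t)`. -/
def evenAE (f : 𝕋 → ℂ) : Prop := ∀ᵐ x ∂μ, f (-x) = f x

/-- `φ = φ₋ tᵏ φ₀` is a weak asymmetric factorization in `L^p(𝕋)`:
`(1+t⁻¹)φ₋ ∈ H^p-bar`, `(1-t⁻¹)φ₋⁻¹ ∈ H^q-bar`, `|1-t|φ₀ ∈ L^q` even,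
`|1+t|φ₀⁻¹ ∈ L^p` even. -/
def WeakAsymFactor (p q : ℝ≥0∞) (φ φm φ0 : 𝕋 → ℂ) (κ : ℤ) : Prop :=
  (∀ᵐ x ∂μ, φ x = φm x * fourier κ x * φ0 x) ∧
  MemLp (fun x => onePlusTInv x * φm x) p μ ∧
  (∀ n : ℤ, 0 < n → fourierCoeff (fun x => onePlusTInv x * φm x) n = 0) ∧
  MemLp (fun x => oneMinusTInv x * (φm x)⁻¹) q μ ∧
  (∀ n : ℤ, 0 < n → fourierCoeff (fun x => oneMinusTInv x * (φm x)⁻¹) n = 0) ∧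
  MemLp (fun x => absOneMinusT x * φ0 x) q μ ∧
  MemLp (fun x => absOnePlusT x * (φ0 x)⁻¹) p μ ∧
  evenAE φ0

/-- `F = φ₋ t^{2κ} (φ₋~)⁻¹` is a weak antisymmetric factorization in `L^p(𝕋)`:
`(1+t⁻¹)φ₋ ∈ H^p-bar` and `(1-t⁻¹)φ₋⁻¹ ∈ H^q-bar`. -/
def WeakAntisymFactor (p q : ℝ≥0∞) (F φm : 𝕋 → ℂ) (κ : ℤ) : Prop :=
  (∀ᵐ x ∂μ, F x = φm x * fourier (2 * κ) x * (φm (-x))⁻¹) ∧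
  MemLp (fun x => onePlusTInv x * φm x) p μ ∧
  (∀ n : ℤ, 0 < n → fourierCoeff (fun x => onePlusTInv x * φm x) n = 0) ∧
  MemLp (fun x => oneMinusTInv x * (φm x)⁻¹) q μ ∧
  (∀ n : ℤ, 0 < n → fourierCoeff (fun x => oneMinusTInv x * (φm x)⁻¹) n = 0)


/-! Since `φ₀` is even and `t^κ(t⁻¹) = t^{-κ}`, reflecting the factorization gives
`φ~ = φ~₋ t^{-κ} φ₀`; dividing, the even factor `φ₀` cancels and `F = φ₋ t^{2κ} φ~₋⁻¹`. -/

lemma fourier_apply_neg {T : ℝ} (n : ℤ) (x : AddCircle T) :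
    fourier n (-x) = (fourier n x)⁻¹ := by
  rw [fourier_apply, fourier_apply, smul_neg, AddCircle.toCircle_neg, Circle.coe_inv]

lemma ae_comp_neg {G : Type*} [MeasurableSpace G] [AddGroup G] [MeasurableNeg G]
    {ν : Measure G} [ν.IsNegInvariant] {P : G → Prop} (hP : ∀ᵐ x ∂ν, P x) :
    ∀ᵐ x ∂ν, P (-x) :=
  (Measure.measurePreserving_neg ν).quasiMeasurePreserving.ae hP

lemma mul_inv_eq_of_eq_mul_mul {K : Type*} [Field K] {a b m m' c z : K}
    (ha : a = m * c * z) (hb : b = m' * c⁻¹ * z) (hz : z ≠ 0) :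
    a * b⁻¹ = m * (c * c) * m'⁻¹ := by
  rw [ha, hb, mul_inv, mul_inv, inv_inv]
  linear_combination m * c * c * m'⁻¹ * mul_inv_cancel₀ hz

lemma WeakAsymFactor.ne_zero_ae {p q : ℝ≥0∞} {φ φm φ0 : 𝕋 → ℂ} {κ : ℤ}
    (h : WeakAsymFactor p q φ φm φ0 κ) (hφ : ∀ᵐ x ∂μ, φ x ≠ 0) : ∀ᵐ x ∂μ, φ0 x ≠ 0 := by
  filter_upwards [h.1, hφ] with x hfac hne hzero
  exact hne (by rw [hfac, hzero, mul_zero])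

theorem stmt_15_general (p q : ℝ)
    (φ φm φ0 : 𝕋 → ℂ) (κ : ℤ) (hφ : GLinf φ)
    (h : WeakAsymFactor (ENNReal.ofReal p) (ENNReal.ofReal q) φ φm φ0 κ) :
    WeakAntisymFactor (ENNReal.ofReal p) (ENNReal.ofReal q)
      (fun x => φ x * (φ (-x))⁻¹) φm κ := by
  have hφ0 := h.ne_zero_ae hφ.2.2
  obtain ⟨hfac, hplus, hplus_coeff, hminus, hminus_coeff, -, -, heven⟩ := h
  refine ⟨?_, hplus, hplus_coeff, hminus, hminus_coeff⟩
  filter_upwards [hfac, ae_comp_neg hfac, heven, hφ0]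
    with x hx hnegx hevenx hne
  rw [hevenx, fourier_apply_neg] at hnegx
  rw [two_mul, fourier_add]
  exact mul_inv_eq_of_eq_mul_mul hx hnegx hne

/-- A weak asymmetric factorization `φ = φ₋ tᵏ φ₀` yields a weak antisymmetric factorization
`F = φ₋ t^{2κ} (φ₋~)⁻¹` of `F = φ φ~⁻¹`, with the same factor `φ₋` and index `κ`. -/
theorem stmt_15 (p q : ℝ) (hpq : p.HolderConjugate q)
    (φ φm φ0 : 𝕋 → ℂ) (κ : ℤ) (hφ : GLinf φ)
    (h : WeakAsymFactor (ENNReal.ofReal p) (ENNReal.ofReal q) φ φm φ0 κ) :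
    WeakAntisymFactor (ENNReal.ofReal p) (ENNReal.ofReal q)
      (fun x => φ x * (φ (-x))⁻¹) φm κ :=
  stmt_15_general p q φ φm φ0 κ hφ h

end TH
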